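/- Let X be a two-dimensional real normed space satisfying property (P-ρS) for some 0 < ρ < 1, with natural parametrization s of S and s⊥ as above. Then for any 0 ≤ α < β ≤ 2π, ∫_α^β s(θ) ∧ ds⊥(θ) = s(β) ∧ s⊥(β) − s(α) ∧ s⊥(α). -/

import Mathlib

open Real Set

/-- `N` is a norm on the two-dimensional real vector space `ℝ × ℝ`. -/
def IsNorm (N : ℝ × ℝ → ℝ) : Prop :=
  (∀ x, N x = 0 ↔ x = 0) ∧ (∀ (a : ℝ) (x : ℝ × ℝ), N (a • x) = |a| * N x) ∧
    ∀ x y, N (x + y) ≤ N x + N y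

/-- The 2D cross product `u ∧ v`; `u ≺ v` means `0 < wedge u v`. -/
def wedge (u v : ℝ × ℝ) : ℝ := u.1 * v.2 - u.2 * v.1

/-- `inf_{t ∈ [0,1]} N ((1−t)u + tv)`, the minimal `N`-norm on the segment `[u,v]`. -/
noncomputable def segInf (N : ℝ × ℝ → ℝ) (u v : ℝ × ℝ) : ℝ :=
  sInf ((fun t : ℝ => N ((1 - t) • u + t • v)) '' Icc (0:ℝ) 1)

/-- Property (P-ρS): every chord of the unit sphere of `N` that supports `ρS`
touches `ρS` at its midpoint. -/
def PropP (N : ℝ × ℝ → ℝ) (ρ : ℝ) : Prop :=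
  ∀ u v : ℝ × ℝ, N u = 1 → N v = 1 → segInf N u v = ρ →
    N ((1/2 : ℝ) • u + (1/2 : ℝ) • v) = ρ

/-- `HasRSIntegral F G a b I` says the Riemann–Stieltjes integral
`∫_a^b F(θ) ∧ dG(θ)` exists and equals `I`: Riemann–Stieltjes sums over tagged
partitions of `[a,b]` with small mesh are close to `I`. -/
def HasRSIntegral (F G : ℝ → ℝ × ℝ) (a b I : ℝ) : Prop :=
  ∀ ε > (0:ℝ), ∃ δ > (0:ℝ), ∀ (n : ℕ) (t τ : ℕ → ℝ), 0 < n →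
    t 0 = a → t n = b →
    (∀ i < n, t i ≤ τ i ∧ τ i ≤ t (i + 1) ∧ t i ≤ t (i + 1) ∧ t (i + 1) - t i < δ) →
    |(∑ i ∈ Finset.range n, wedge (F (τ i)) (G (t (i + 1)) - G (t i))) - I| < ε

/-! Birkhoff orthogonality of `s⊥(θ)` to `s(θ)` says that the line through `s(θ)` in direction
`s⊥(θ)` supports the unit ball, i.e. `x ∧ s⊥(θ) ≤ N(x) · (s(θ) ∧ s⊥(θ))` for all `x`. Comparing a
Riemann–Stieltjes sum with the telescoping sum of `s ∧ s⊥`, the error on `[tᵢ, tᵢ₊₁]` with tag `τᵢ`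
is `(s(tᵢ) - s(τᵢ)) ∧ s⊥(tᵢ) - (s(tᵢ₊₁) - s(τᵢ)) ∧ s⊥(tᵢ₊₁)`, and the support inequality (used at
both ends and at the tag) traps each term between `0` and `2 ‖Δs‖ ‖Δs⊥‖`. Writing
`s⊥(θ) = s(A(θ))` with `θ < A(θ) < θ + π`, the same support inequality forces `A` to be
nondecreasing on short intervals; as `s` is Lipschitz, the errors add up to at most
`O(mesh) · (A(β) - A(α))`. -/

lemma abs_wedge_le (x y : ℝ × ℝ) : |wedge x y| ≤ 2 * ‖x‖ * ‖y‖ := by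
  have h₁ : |x.1| ≤ ‖x‖ := norm_fst_le x
  have h₂ : |x.2| ≤ ‖x‖ := norm_snd_le x
  have h₃ : |y.1| ≤ ‖y‖ := norm_fst_le y
  have h₄ : |y.2| ≤ ‖y‖ := norm_snd_le y
  calc |wedge x y| ≤ |x.1| * |y.2| + |x.2| * |y.1| := by
        rw [wedge, ← abs_mul, ← abs_mul]; exact abs_sub _ _
    _ ≤ ‖x‖ * ‖y‖ + ‖x‖ * ‖y‖ := by gcongr
    _ = 2 * ‖x‖ * ‖y‖ := by ring

lemma wedge_sub_nonneg_and_le_of_support {p q P Q : ℝ × ℝ} (hP : wedge q P ≤ wedge p P)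
    (hQ : wedge p Q ≤ wedge q Q) :
    0 ≤ wedge (p - q) P ∧ wedge (p - q) P ≤ 2 * ‖p - q‖ * ‖P - Q‖ := by
  have hsub : wedge (p - q) P = wedge p P - wedge q P := by
    simp only [wedge, Prod.fst_sub, Prod.snd_sub]; ring
  have hcross : wedge (p - q) (P - Q) = wedge (p - q) P - wedge p Q + wedge q Q := by
    simp only [wedge, Prod.fst_sub, Prod.snd_sub]; ring
  refine ⟨by linarith, ?_⟩
  linarith [le_abs_self (wedge (p - q) (P - Q)), abs_wedge_le (p - q) (P - Q)]

lemma abs_wedge_increment_le {p q r P Q R : ℝ × ℝ}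
    (hpP : wedge q P ≤ wedge p P) (hpQ : wedge p Q ≤ wedge q Q)
    (hrR : wedge q R ≤ wedge r R) (hrQ : wedge r Q ≤ wedge q Q) :
    |wedge q (R - P) - (wedge r R - wedge p P)| ≤
      2 * ‖r - q‖ * ‖R - Q‖ + 2 * ‖p - q‖ * ‖P - Q‖ := by
  have hsplit : wedge q (R - P) - (wedge r R - wedge p P) = wedge (p - q) P - wedge (r - q) R := by
    simp only [wedge, Prod.fst_sub, Prod.snd_sub]; ring
  obtain ⟨hp₀, hp₁⟩ := wedge_sub_nonneg_and_le_of_support hpP hpQ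
  obtain ⟨hr₀, hr₁⟩ := wedge_sub_nonneg_and_le_of_support hrR hrQ
  rw [hsplit, abs_le]
  constructor <;> nlinarith [norm_nonneg (r - q), norm_nonneg (R - Q), norm_nonneg (p - q),
    norm_nonneg (P - Q)]

lemma mem_Icc_of_le_succ {t : ℕ → ℝ} {n : ℕ} (ht : ∀ i < n, t i ≤ t (i + 1)) {i : ℕ}
    (hi : i ≤ n) : t i ∈ Icc (t 0) (t n) := by
  have hmono : Monotone fun j => t (min j n) := by
    refine monotone_nat_of_le_succ fun j => ?_
    rcases lt_or_ge j n with hj | hj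
    · simpa [min_eq_left hj.le, min_eq_left (Nat.succ_le_of_lt hj)] using ht j hj
    · simp [min_eq_right hj, min_eq_right (hj.trans j.le_succ)]
  have h0 := hmono (Nat.zero_le i)
  have hn := hmono hi
  simp only [min_eq_left hi, min_self, Nat.zero_le, min_eq_left] at h0 hn
  exact ⟨h0, hn⟩

lemma hasRSIntegral_of_local_bound {F G : ℝ → ℝ × ℝ} {Φ V : ℝ → ℝ} {a b : ℝ}
    (h : ∀ ε > (0:ℝ), ∃ δ > (0:ℝ), ∀ x τ y, a ≤ x → x ≤ τ → τ ≤ y → y ≤ b → y - x < δ →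
      |wedge (F τ) (G y - G x) - (Φ y - Φ x)| ≤ ε * (V y - V x)) :
    HasRSIntegral F G a b (Φ b - Φ a) := by
  intro ε hε
  set M := |V b - V a| + 1
  have hM : 0 < M := by positivity
  obtain ⟨δ, hδ, hloc⟩ := h (ε / M) (div_pos hε hM)
  refine ⟨δ, hδ, fun n t τ _ ht0 htn hpart => ?_⟩
  have hmem : ∀ i ≤ n, t i ∈ Icc a b := fun i hi => by
    simpa [ht0, htn] using mem_Icc_of_le_succ (fun j hj => (hpart j hj).2.2.1) hi
  have hstep : ∀ i ∈ Finset.range n,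
      |wedge (F (τ i)) (G (t (i + 1)) - G (t i)) - (Φ (t (i + 1)) - Φ (t i))| ≤
        ε / M * (V (t (i + 1)) - V (t i)) := fun i hi => by
    rw [Finset.mem_range] at hi
    obtain ⟨h₁, h₂, -, h₃⟩ := hpart i hi
    exact hloc _ _ _ (hmem i hi.le).1 h₁ h₂ (hmem (i + 1) hi).2 h₃
  have htel : ∀ f : ℝ → ℝ, ∑ i ∈ Finset.range n, (f (t (i + 1)) - f (t i)) = f b - f a := by
    intro f; rw [Finset.sum_range_sub (fun i => f (t i)), ht0, htn]
  calc |(∑ i ∈ Finset.range n, wedge (F (τ i)) (G (t (i + 1)) - G (t i))) - (Φ b - Φ a)|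
      = |∑ i ∈ Finset.range n,
          (wedge (F (τ i)) (G (t (i + 1)) - G (t i)) - (Φ (t (i + 1)) - Φ (t i)))| := by
        rw [Finset.sum_sub_distrib, htel]
    _ ≤ ∑ i ∈ Finset.range n, ε / M * (V (t (i + 1)) - V (t i)) :=
        (Finset.abs_sum_le_sum_abs _ _).trans (Finset.sum_le_sum hstep)
    _ = ε / M * (V b - V a) := by rw [← Finset.mul_sum, htel]
    _ ≤ ε / M * |V b - V a| := by gcongr; exact le_abs_self _
    _ < ε := by
        rw [div_mul_eq_mul_div, div_lt_iff₀ hM]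
        nlinarith

namespace IsNorm

variable {N : ℝ × ℝ → ℝ}

lemma map_zero (hN : IsNorm N) : N 0 = 0 := (hN.1 0).2 rfl

lemma map_neg (hN : IsNorm N) (x : ℝ × ℝ) : N (-x) = N x := by
  rw [← neg_one_smul ℝ x, hN.2.1]; simp

lemma nonneg (hN : IsNorm N) (x : ℝ × ℝ) : 0 ≤ N x := by
  have h := hN.2.2 x (-x)
  rw [add_neg_cancel, hN.map_zero, hN.map_neg] at h
  linarith

lemma pos (hN : IsNorm N) {x : ℝ × ℝ} (hx : x ≠ 0) : 0 < N x :=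
  (hN.nonneg x).lt_of_ne fun h => hx ((hN.1 x).1 h.symm)

lemma le_mul_norm (hN : IsNorm N) (z : ℝ × ℝ) : N z ≤ (N (1, 0) + N (0, 1)) * ‖z‖ := by
  have hz : z = z.1 • ((1:ℝ), (0:ℝ)) + z.2 • ((0:ℝ), (1:ℝ)) := by ext <;> simp
  have h := hN.2.2 (z.1 • ((1:ℝ), (0:ℝ))) (z.2 • ((0:ℝ), (1:ℝ)))
  rw [← hz, hN.2.1, hN.2.1] at h
  have h₁ : |z.1| ≤ ‖z‖ := norm_fst_le z
  have h₂ : |z.2| ≤ ‖z‖ := norm_snd_le z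
  nlinarith [hN.nonneg (1, 0), hN.nonneg (0, 1)]

lemma abs_sub_le_mul_norm (hN : IsNorm N) (x y : ℝ × ℝ) :
    |N x - N y| ≤ (N (1, 0) + N (0, 1)) * ‖x - y‖ := by
  have h₁ := hN.2.2 (x - y) y
  have h₂ := hN.2.2 (y - x) x
  rw [sub_add_cancel] at h₁ h₂
  rw [← neg_sub, hN.map_neg] at h₂
  exact (abs_sub_le_iff.2 ⟨by linarith, by linarith⟩).trans (hN.le_mul_norm _)

lemma continuous (hN : IsNorm N) : Continuous N := by
  refine (LipschitzWith.of_dist_le_mul fun x y => ?_).continuous (K := (N (1, 0) + N (0, 1)).toNNReal)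
  rw [Real.dist_eq, dist_eq_norm, Real.coe_toNNReal _ (add_nonneg (hN.nonneg _) (hN.nonneg _))]
  exact hN.abs_sub_le_mul_norm x y

lemma wedge_le_mul_of_birkhoff (hN : IsNorm N) {v w : ℝ × ℝ}
    (hv : N v = 1) (hvw : 0 < wedge v w) (horth : ∀ l : ℝ, N v ≤ N (v + l • w))
    (x : ℝ × ℝ) : wedge x w ≤ N x * wedge v w := by
  rcases le_or_gt (wedge x w) 0 with hx | hx
  · nlinarith [hN.nonneg x]
  have hdecomp : wedge v w • x = wedge x w • (v + (wedge v x / wedge x w) • w) := by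
    rw [smul_add, smul_smul, mul_div_cancel₀ _ hx.ne']
    ext <;> simp only [Prod.fst_add, Prod.snd_add, Prod.smul_fst, Prod.smul_snd, smul_eq_mul,
      wedge] <;> ring
  have hN_decomp := congrArg N hdecomp
  rw [hN.2.1, hN.2.1, abs_of_pos hvw, abs_of_pos hx] at hN_decomp
  nlinarith [horth (wedge v x / wedge x w)]

end IsNorm

lemma exists_eq_smul_cos_sin_of_wedge_pos {θ : ℝ} {P : ℝ × ℝ}
    (h : 0 < wedge (cos θ, sin θ) P) :
    ∃ r φ : ℝ, 0 < r ∧ θ < φ ∧ φ < θ + π ∧ P = r • ((cos φ, sin φ) : ℝ × ℝ) := by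
  -- `z` is `P` written in the frame rotated by `θ`
  set z : ℂ := ⟨cos θ * P.1 + sin θ * P.2, wedge (cos θ, sin θ) P⟩
  have hz : z ≠ 0 := fun h0 => h.ne' (congrArg Complex.im h0)
  have harg0 : 0 < Complex.arg z := by
    refine (Complex.arg_nonneg_iff.2 h.le).lt_of_ne fun h0 => h.ne' ?_
    exact (Complex.arg_eq_zero_iff.1 h0.symm).2
  have hargπ : Complex.arg z < π := Complex.arg_lt_pi_iff.2 (Or.inr h.ne')
  have hre : ‖z‖ * cos (Complex.arg z) = cos θ * P.1 + sin θ * P.2 := Complex.norm_mul_cos_arg z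
  have him : ‖z‖ * sin (Complex.arg z) = cos θ * P.2 - sin θ * P.1 := Complex.norm_mul_sin_arg z
  refine ⟨‖z‖, θ + Complex.arg z, norm_pos_iff.2 hz, by linarith, by linarith, ?_⟩
  have hpyth := sin_sq_add_cos_sq θ
  ext <;> simp only [Prod.smul_fst, Prod.smul_snd, smul_eq_mul, cos_add, sin_add]
  · linear_combination (-P.1) * hpyth - cos θ * hre + sin θ * him
  · linear_combination (-P.2) * hpyth - sin θ * hre - cos θ * him

lemma le_of_sin_support {θ θ' φ φ' a a' : ℝ} (hθ : θ < θ') (hθπ : θ' - θ < π)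
    (hφ : φ < θ + π) (hφ' : θ' < φ') (ha : 0 < a) (ha' : 0 < a')
    (h : a' * sin (φ - θ') ≤ a * sin (φ - θ)) (h' : a * sin (φ' - θ) ≤ a' * sin (φ' - θ')) :
    φ ≤ φ' := by
  by_contra! hlt
  have key : sin (φ - θ') * sin (φ' - θ) - sin (φ - θ) * sin (φ' - θ') =
      sin (φ - φ') * sin (θ' - θ) := by
    simp only [sin_sub]; ring
  have h₁ : 0 < sin (φ' - θ) := sin_pos_of_pos_of_lt_pi (by linarith) (by linarith)
  have h₂ : 0 < sin (φ - θ) := sin_pos_of_pos_of_lt_pi (by linarith) (by linarith)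
  have h₃ : 0 < sin (φ - φ') * sin (θ' - θ) :=
    mul_pos (sin_pos_of_pos_of_lt_pi (by linarith) (by linarith))
      (sin_pos_of_pos_of_lt_pi (by linarith) hθπ)
  have hprod := mul_le_mul h h' (mul_pos ha h₁).le (mul_pos ha h₂).le
  nlinarith [mul_pos ha ha']

lemma norm_cos_sin_sub_le (x y : ℝ) :
    ‖((cos x, sin x) : ℝ × ℝ) - (cos y, sin y)‖ ≤ |x - y| :=
  max_le (abs_cos_sub_cos_le x y) (abs_sin_sub_sin_le x y)

lemma norm_cos_sin_le_one (θ : ℝ) : ‖((cos θ, sin θ) : ℝ × ℝ)‖ ≤ 1 :=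
  max_le (abs_cos_le_one θ) (abs_sin_le_one θ)

section NaturalParametrization

variable {N : ℝ × ℝ → ℝ} {s : ℝ → ℝ × ℝ}

lemma IsNorm.cos_sin_pos (hN : IsNorm N) (θ : ℝ) : 0 < N (cos θ, sin θ) := by
  refine hN.pos fun h => ?_
  have h1 := sin_sq_add_cos_sq θ
  rw [show cos θ = 0 from congrArg Prod.fst h, show sin θ = 0 from congrArg Prod.snd h] at h1
  norm_num at h1

lemma IsNorm.exists_pos_le_cos_sin (hN : IsNorm N) : ∃ m > 0, ∀ θ : ℝ, m ≤ N (cos θ, sin θ) := by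
  have hper : Function.Periodic (fun θ : ℝ => N (cos θ, sin θ)) (2 * π) := fun θ => by
    simp only [cos_add_two_pi, sin_add_two_pi]
  have hcont : Continuous fun θ : ℝ => N (cos θ, sin θ) := hN.continuous.comp (by fun_prop)
  obtain ⟨m, ⟨θ₀, rfl⟩, hm⟩ :=
    (hper.compact_of_continuous two_pi_pos.ne' hcont).exists_isLeast (range_nonempty _)
  exact ⟨_, hN.cos_sin_pos θ₀, fun θ => hm ⟨θ, rfl⟩⟩

lemma norm_param_eq_one (hN : IsNorm N)
    (hs : ∀ θ : ℝ, s θ = (N (cos θ, sin θ))⁻¹ • ((cos θ, sin θ) : ℝ × ℝ)) (θ : ℝ) :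
    N (s θ) = 1 := by
  rw [hs, hN.2.1, abs_of_pos (inv_pos.2 (hN.cos_sin_pos θ)), inv_mul_cancel₀ (hN.cos_sin_pos θ).ne']

lemma wedge_param_left (hs : ∀ θ : ℝ, s θ = (N (cos θ, sin θ))⁻¹ • ((cos θ, sin θ) : ℝ × ℝ))
    (θ : ℝ) (P : ℝ × ℝ) : wedge (s θ) P = (N (cos θ, sin θ))⁻¹ * wedge (cos θ, sin θ) P := by
  rw [hs]; simp only [wedge, Prod.smul_fst, Prod.smul_snd, smul_eq_mul]; ring

lemma wedge_param_param (hs : ∀ θ : ℝ, s θ = (N (cos θ, sin θ))⁻¹ • ((cos θ, sin θ) : ℝ × ℝ))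
    (φ ψ : ℝ) :
    wedge (s φ) (s ψ) = (N (cos φ, sin φ))⁻¹ * (N (cos ψ, sin ψ))⁻¹ * sin (ψ - φ) := by
  rw [wedge_param_left hs, hs]
  simp only [wedge, Prod.smul_fst, Prod.smul_snd, smul_eq_mul, sin_sub]; ring

lemma exists_param_eq_of_wedge_pos (hN : IsNorm N)
    (hs : ∀ θ : ℝ, s θ = (N (cos θ, sin θ))⁻¹ • ((cos θ, sin θ) : ℝ × ℝ)) {θ : ℝ} {P : ℝ × ℝ}
    (hP : N P = 1) (h : 0 < wedge (s θ) P) : ∃ φ, θ < φ ∧ φ < θ + π ∧ P = s φ := by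
  rw [wedge_param_left hs] at h
  obtain ⟨r, φ, hr, hθφ, hφθ, rfl⟩ :=
    exists_eq_smul_cos_sin_of_wedge_pos (pos_of_mul_pos_right h (inv_pos.2 (hN.cos_sin_pos θ)).le)
  refine ⟨φ, hθφ, hφθ, ?_⟩
  rw [hN.2.1, abs_of_pos hr] at hP
  rw [hs, ← eq_inv_of_mul_eq_one_left hP]

lemma le_of_param_support (hN : IsNorm N)
    (hs : ∀ θ : ℝ, s θ = (N (cos θ, sin θ))⁻¹ • ((cos θ, sin θ) : ℝ × ℝ)) {θ θ' φ φ' : ℝ}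
    (hθ : θ < θ') (hθπ : θ' - θ < π) (hφ : φ < θ + π) (hφ' : θ' < φ')
    (hsupp : wedge (s θ') (s φ) ≤ wedge (s θ) (s φ))
    (hsupp' : wedge (s θ) (s φ') ≤ wedge (s θ') (s φ')) : φ ≤ φ' := by
  have hinv (ψ : ℝ) : 0 < (N (cos ψ, sin ψ))⁻¹ := inv_pos.2 (hN.cos_sin_pos ψ)
  rw [wedge_param_param hs, wedge_param_param hs] at hsupp hsupp'
  refine le_of_sin_support hθ hθπ hφ hφ' (hinv θ) (hinv θ') ?_ ?_
  · refine le_of_mul_le_mul_right ?_ (hinv φ); linarith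
  · refine le_of_mul_le_mul_right ?_ (hinv φ'); linarith

lemma exists_lipschitz_param (hN : IsNorm N)
    (hs : ∀ θ : ℝ, s θ = (N (cos θ, sin θ))⁻¹ • ((cos θ, sin θ) : ℝ × ℝ)) :
    ∃ L > 0, ∀ x y : ℝ, ‖s x - s y‖ ≤ L * |x - y| := by
  obtain ⟨m, hm, hmN⟩ := hN.exists_pos_le_cos_sin
  set K := N (1, 0) + N (0, 1)
  have hK : 0 ≤ K := add_nonneg (hN.nonneg _) (hN.nonneg _)
  set g : ℝ → ℝ := fun θ => (N (cos θ, sin θ))⁻¹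
  have hg (θ : ℝ) : 0 < g θ ∧ g θ ≤ m⁻¹ :=
    ⟨inv_pos.2 (hN.cos_sin_pos θ), inv_anti₀ hm (hmN θ)⟩
  have hg_lip (x y : ℝ) : |g x - g y| ≤ K * m⁻¹ ^ 2 * |x - y| := by
    rw [inv_sub_inv' (hN.cos_sin_pos x).ne' (hN.cos_sin_pos y).ne', abs_mul, abs_mul,
      abs_of_pos (hg x).1, abs_of_pos (hg y).1, abs_sub_comm]
    calc g x * |N (cos x, sin x) - N (cos y, sin y)| * g y
        ≤ m⁻¹ * (K * |x - y|) * m⁻¹ := by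
          have hN_lip := (hN.abs_sub_le_mul_norm _ _).trans
            (mul_le_mul_of_nonneg_left (norm_cos_sin_sub_le x y) hK)
          exact mul_le_mul (mul_le_mul (hg x).2 hN_lip (abs_nonneg _) (by positivity)) (hg y).2
            (hg y).1.le (by positivity)
      _ = K * m⁻¹ ^ 2 * |x - y| := by ring
  refine ⟨m⁻¹ + K * m⁻¹ ^ 2, by positivity, fun x y => ?_⟩
  have hsplit : s x - s y = g x • (((cos x, sin x) : ℝ × ℝ) - (cos y, sin y)) +
      (g x - g y) • ((cos y, sin y) : ℝ × ℝ) := by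
    rw [hs, hs]; module
  calc ‖s x - s y‖ ≤ g x * |x - y| + K * m⁻¹ ^ 2 * |x - y| * 1 := by
        rw [hsplit]
        refine (norm_add_le _ _).trans (add_le_add ?_ ?_) <;> rw [norm_smul]
        · rw [Real.norm_of_nonneg (hg x).1.le]
          exact mul_le_mul_of_nonneg_left (norm_cos_sin_sub_le x y) (hg x).1.le
        · exact mul_le_mul (hg_lip x y) (norm_cos_sin_le_one y) (norm_nonneg _) (by positivity)
    _ ≤ (m⁻¹ + K * m⁻¹ ^ 2) * |x - y| := by nlinarith [(hg x).2, abs_nonneg (x - y)]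

lemma wedge_param_le_of_birkhoff (hN : IsNorm N)
    (hs : ∀ θ : ℝ, s θ = (N (cos θ, sin θ))⁻¹ • ((cos θ, sin θ) : ℝ × ℝ)) {θ : ℝ} {P : ℝ × ℝ}
    (hP : 0 < wedge (s θ) P) (horth : ∀ l : ℝ, N (s θ) ≤ N (s θ + l • P)) (φ : ℝ) :
    wedge (s φ) P ≤ wedge (s θ) P := by
  simpa only [norm_param_eq_one hN hs, one_mul] using
    hN.wedge_le_mul_of_birkhoff (norm_param_eq_one hN hs θ) hP horth (s φ)

lemma exists_angle_of_birkhoff (hN : IsNorm N)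
    (hs : ∀ θ : ℝ, s θ = (N (cos θ, sin θ))⁻¹ • ((cos θ, sin θ) : ℝ × ℝ)) {S : Set ℝ}
    {sperp : ℝ → ℝ × ℝ} (hperp : ∀ θ ∈ S, N (sperp θ) = 1 ∧ 0 < wedge (s θ) (sperp θ) ∧
      ∀ l : ℝ, N (s θ) ≤ N (s θ + l • sperp θ)) :
    ∃ A : ℝ → ℝ, (∀ θ ∈ S, sperp θ = s (A θ)) ∧
      (∀ θ ∈ S, ∀ φ, wedge (s φ) (s (A θ)) ≤ wedge (s θ) (s (A θ))) ∧
      ∀ θ ∈ S, ∀ θ' ∈ S, θ ≤ θ' → θ' - θ < π → A θ ≤ A θ' := by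
  have hex (θ : ℝ) : ∃ φ, θ ∈ S → θ < φ ∧ φ < θ + π ∧ sperp θ = s φ := by
    by_cases hθ : θ ∈ S
    · obtain ⟨φ, hφ⟩ := exists_param_eq_of_wedge_pos hN hs (hperp θ hθ).1 (hperp θ hθ).2.1
      exact ⟨φ, fun _ => hφ⟩
    · exact ⟨0, fun h => absurd h hθ⟩
  choose A hA using hex
  have hsupp (θ : ℝ) (hθ : θ ∈ S) (φ : ℝ) : wedge (s φ) (s (A θ)) ≤ wedge (s θ) (s (A θ)) := by
    rw [← (hA θ hθ).2.2]
    exact wedge_param_le_of_birkhoff hN hs (hperp θ hθ).2.1 (hperp θ hθ).2.2 φ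
  refine ⟨A, fun θ hθ => (hA θ hθ).2.2, hsupp, fun θ hθ θ' hθ' hle hπ => ?_⟩
  rcases hle.eq_or_lt with rfl | hlt
  · rfl
  exact le_of_param_support hN hs hlt hπ (hA θ hθ).2.1 (hA θ' hθ').1 (hsupp θ hθ θ')
    (hsupp θ' hθ' θ)

end NaturalParametrization

lemma abs_wedge_increment_le_of_lipschitz {s : ℝ → ℝ × ℝ} {L x τ y φ ψ χ : ℝ}
    (hL0 : 0 ≤ L) (hL : ∀ a b, ‖s a - s b‖ ≤ L * |a - b|)
    (hxτ : x ≤ τ) (hτy : τ ≤ y) (hφψ : φ ≤ ψ) (hψχ : ψ ≤ χ)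
    (hx : ∀ θ, wedge (s θ) (s φ) ≤ wedge (s x) (s φ))
    (hτ : ∀ θ, wedge (s θ) (s ψ) ≤ wedge (s τ) (s ψ))
    (hy : ∀ θ, wedge (s θ) (s χ) ≤ wedge (s y) (s χ)) :
    |wedge (s τ) (s χ - s φ) - (wedge (s y) (s χ) - wedge (s x) (s φ))| ≤
      2 * L ^ 2 * (y - x) * (χ - φ) := by
  have hdist {a b c d : ℝ} (hab : a ≤ b) (hcd : a ≤ c ∧ c ≤ b) (hd : a ≤ d ∧ d ≤ b) :
      ‖s c - s d‖ ≤ L * (b - a) :=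
    (hL c d).trans (mul_le_mul_of_nonneg_left (abs_sub_le_iff.2 ⟨by linarith, by linarith⟩) hL0)
  refine (abs_wedge_increment_le (hx τ) (hτ x) (hy τ) (hτ y)).trans ?_
  have hxy : x ≤ y := hxτ.trans hτy
  have h₁ := hdist hxy ⟨hxτ.trans hτy, le_rfl⟩ ⟨hxτ, hτy⟩
  have h₂ := hdist hψχ ⟨hψχ, le_rfl⟩ ⟨le_rfl, hψχ⟩
  have h₃ := hdist hxy ⟨le_rfl, hxy⟩ ⟨hxτ, hτy⟩
  have h₄ := hdist hφψ ⟨le_rfl, hφψ⟩ ⟨hφψ, le_rfl⟩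
  calc 2 * ‖s y - s τ‖ * ‖s χ - s ψ‖ + 2 * ‖s x - s τ‖ * ‖s φ - s ψ‖
      ≤ 2 * (L * (y - x)) * (L * (χ - ψ)) + 2 * (L * (y - x)) * (L * (ψ - φ)) := by
        gcongr
    _ = 2 * L ^ 2 * (y - x) * (χ - φ) := by ring

theorem stmt_14_general (N : ℝ × ℝ → ℝ) (hN : IsNorm N) (s sperp : ℝ → ℝ × ℝ)
    (hs : ∀ θ : ℝ, s θ = (N (Real.cos θ, Real.sin θ))⁻¹ • ((Real.cos θ, Real.sin θ) : ℝ × ℝ))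
    (hperp : ∀ θ ∈ Icc (0:ℝ) (2 * π), N (sperp θ) = 1 ∧ 0 < wedge (s θ) (sperp θ) ∧
      ∀ l : ℝ, N (s θ) ≤ N (s θ + l • sperp θ))
    (α β : ℝ) (hα : 0 ≤ α) (hβ : β ≤ 2 * π) :
    HasRSIntegral s sperp α β (wedge (s β) (sperp β) - wedge (s α) (sperp α)) := by
  obtain ⟨A, hsperp, hsupp, hmono⟩ := exists_angle_of_birkhoff hN hs hperp
  obtain ⟨L, hL0, hL⟩ := exists_lipschitz_param hN hs
  refine hasRSIntegral_of_local_bound (Φ := fun θ => wedge (s θ) (sperp θ)) (V := A)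
    fun ε hε => ⟨min π (ε / (2 * L ^ 2)), by positivity, fun x τ y hx hxτ hτy hy hxy => ?_⟩
  have hxI : x ∈ Icc (0:ℝ) (2 * π) := ⟨hα.trans hx, by linarith⟩
  have hτI : τ ∈ Icc (0:ℝ) (2 * π) := ⟨by linarith, by linarith⟩
  have hyI : y ∈ Icc (0:ℝ) (2 * π) := ⟨by linarith, hy.trans hβ⟩
  have hπ : y - x < π := hxy.trans_le (min_le_left _ _)
  have hε' : 2 * L ^ 2 * (y - x) ≤ ε := by
    have := hxy.le.trans (min_le_right _ _)
    rwa [le_div_iff₀ (by positivity), mul_comm] at this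
  have hxτA := hmono x hxI τ hτI hxτ (by linarith)
  have hτyA := hmono τ hτI y hyI hτy (by linarith)
  calc |wedge (s τ) (sperp y - sperp x) - (wedge (s y) (sperp y) - wedge (s x) (sperp x))|
      ≤ 2 * L ^ 2 * (y - x) * (A y - A x) := by
        rw [hsperp x hxI, hsperp y hyI]
        exact abs_wedge_increment_le_of_lipschitz hL0.le hL hxτ hτy hxτA hτyA (hsupp x hxI)
          (hsupp τ hτI) (hsupp y hyI)
    _ ≤ ε * (A y - A x) := by gcongr; linarith

/-- Under (P-ρS), with `s` the natural parametrization of `S` and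
`s⊥(θ)` the Birkhoff-orthogonal successor of `s(θ)`, for all `0 ≤ α < β ≤ 2π`:
`∫_α^β s(θ) ∧ ds⊥(θ) = s(β) ∧ s⊥(β) − s(α) ∧ s⊥(α)`. -/
theorem stmt_14 (N : ℝ × ℝ → ℝ) (hN : IsNorm N) (ρ : ℝ) (hρ0 : 0 < ρ) (hρ1 : ρ < 1)
    (hP : PropP N ρ) (s sperp : ℝ → ℝ × ℝ)
    (hs : ∀ θ : ℝ, s θ = (N (Real.cos θ, Real.sin θ))⁻¹ • ((Real.cos θ, Real.sin θ) : ℝ × ℝ))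
    (hperp : ∀ θ ∈ Icc (0:ℝ) (2 * π), N (sperp θ) = 1 ∧ 0 < wedge (s θ) (sperp θ) ∧
      ∀ l : ℝ, N (s θ) ≤ N (s θ + l • sperp θ))
    (α β : ℝ) (hα : 0 ≤ α) (hαβ : α < β) (hβ : β ≤ 2 * π) :
    HasRSIntegral s sperp α β (wedge (s β) (sperp β) - wedge (s α) (sperp α)) :=
  stmt_14_general N hN s sperp hs hperp α β hα hβ
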